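/- arXiv:2311.18171 — 2 statements merged into one kernel-verified Lean document; each statement's English description precedes it below -/
import Mathlib

section
/- Let N and M be positive integers, let α and β be finite sets with |α| = N and |β| = M, and let H : α → β be any function. Then the squared sum (∑_{y ∈ β} √(Pr_x[H(x) = y] / M))² is at most |range(H)| / M, and in particular at most N / M, where range(H) denotes the image of H. -/
open Finset

theorem sq_sum_sqrt_le_card_mul_sum {ι : Type*} [Fintype ι] (s : Finset ι) {f : ι → ℝ}
    (hf : ∀ i, 0 ≤ f i) (hs : ∀ i ∉ s, f i = 0) :
    (∑ i, √(f i)) ^ 2 ≤ #s * ∑ i, f i := by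
  have sum_eq_sum_on {g : ι → ℝ} (hg : ∀ i ∉ s, g i = 0) : ∑ i, g i = ∑ i ∈ s, g i :=
    (sum_subset (subset_univ s) fun i _ hi => hg i hi).symm
  calc (∑ i, √(f i)) ^ 2 = (∑ i ∈ s, √(f i)) ^ 2 := by
        rw [sum_eq_sum_on fun i hi => by rw [hs i hi, Real.sqrt_zero]]
    _ ≤ #s * ∑ i ∈ s, √(f i) ^ 2 := sq_sum_le_card_mul_sum_sq
    _ = #s * ∑ i, f i := by simp_rw [Real.sq_sqrt (hf _), sum_eq_sum_on hs]

theorem fidelity_le_range_card_div_general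
    (N M : ℕ)
    (α β : Type*) [Fintype α] [Fintype β] [DecidableEq β]
    (hα : Fintype.card α = N) (H : α → β) :
    (∑ y : β, Real.sqrt ((((univ.filter (fun x => H x = y)).card : ℝ) / N) / M)) ^ 2
        ≤ ((univ.image H).card : ℝ) / M ∧
    (∑ y : β, Real.sqrt ((((univ.filter (fun x => H x = y)).card : ℝ) / N) / M)) ^ 2
        ≤ (N : ℝ) / M := by
  set p : β → ℝ := fun y => (((univ.filter (fun x => H x = y)).card : ℝ) / N) / M
  have hp_supp : ∀ y ∉ univ.image H, p y = 0 := fun y hy => by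
    simp_all [p]
  -- Only `≤`: for `N = 0` (empty `α`) every `p y` is `0`.
  have hp_sum : ∑ y, p y ≤ 1 / M := by
    simp only [p, ← sum_div, ← Nat.cast_sum,
      ← card_eq_sum_card_fiberwise fun x _ => mem_univ (H x), card_univ, hα]
    gcongr
    exact div_self_le_one _
  have hrange : (∑ y, √(p y)) ^ 2 ≤ #(univ.image H) / M := by
    calc (∑ y, √(p y)) ^ 2 ≤ #(univ.image H) * ∑ y, p y :=
          sq_sum_sqrt_le_card_mul_sum _ (fun y => by positivity) hp_supp
      _ ≤ #(univ.image H) * (1 / M) := by gcongr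
      _ = #(univ.image H) / M := mul_one_div _ _
  refine ⟨hrange, hrange.trans ?_⟩
  gcongr
  rw [← hα, ← card_univ]
  exact_mod_cast card_image_le

/-- For a function `H : α → β` between finite sets with `|α| = N`, `|β| = M`,
the squared sum `(∑ y, √(Pr_x[H x = y] / M))²` is at most `|range H| / M`,
and in particular at most `N / M`. -/
theorem fidelity_le_range_card_div
    (N M : ℕ) (hN : 0 < N) (hM : 0 < M)
    (α β : Type*) [Fintype α] [Fintype β] [DecidableEq β]
    (hα : Fintype.card α = N) (hβ : Fintype.card β = M) (H : α → β) :
    (∑ y : β, Real.sqrt ((((univ.filter (fun x => H x = y)).card : ℝ) / N) / M)) ^ 2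
        ≤ ((univ.image H).card : ℝ) / M ∧
    (∑ y : β, Real.sqrt ((((univ.filter (fun x => H x = y)).card : ℝ) / N) / M)) ^ 2
        ≤ (N : ℝ) / M :=
  fidelity_le_range_card_div_general N M α β hα H
end

section
/- Let n be a natural number, let H be a complex inner product space, and let (v_{i,j})_{(i,j) ∈ [0..n]×[0..n]} be an orthonormal family in H. Define w := (n+1)^{-1/2} · ∑_{j=0}^{n} v_{0,j} and φ̃ := (1 − 2/√(n+1)) · w − (2/(n+1)) · ∑_{(i,j) : i ≠ j} v_{i,j}. Then the inner product ⟨w, φ̃⟩ equals 1 − (2/√(n+1))·(1 + n/(n+1)), and in particular ⟨w, φ̃⟩ ≥ 1 − 4/√(n+1). -/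
/-!
Both sums are sums of distinct members of the orthonormal family, so their inner product counts
common indices: `w` is the normalised sum over the row `i = 0`, which has `n + 1` indices and
shares all of them but `(0, 0)` with the off-diagonal. Hence `⟪w, w⟫ = 1` and
`⟪w, ∑_{i ≠ j} v (i, j)⟫ = n / √(n + 1)`, and the rest is arithmetic.
-/

open Finset

theorem Orthonormal.inner_sum_sum_eq_card {𝕜 E ι : Type*} [RCLike 𝕜] [NormedAddCommGroup E]
    [InnerProductSpace 𝕜 E] [DecidableEq ι] {v : ι → E} (hv : Orthonormal 𝕜 v) (s t : Finset ι) :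
    inner 𝕜 (∑ i ∈ s, v i) (∑ j ∈ t, v j) = #(s ∩ t) := by
  simp [sum_inner, inner_sum, orthonormal_iff_ite.mp hv, inter_comm]

theorem card_map_sectR_inter_filter_ne (n : ℕ) (i : Fin (n + 1)) :
    #(univ.map (Function.Embedding.sectR i (Fin (n + 1))) ∩
      univ.filter (fun p : Fin (n + 1) × Fin (n + 1) => p.1 ≠ p.2)) = n := by
  rw [inter_filter, inter_univ, filter_map, card_map]
  simp [filter_ne]

theorem two_div_mul_one_add_div_le {s x : ℝ} (hs : 0 ≤ s) (hx : 0 ≤ x) :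
    2 / s * (1 + x / (x + 1)) ≤ 4 / s := by
  have : x / (x + 1) ≤ 1 := div_le_one_of_le₀ (by linarith) (by linarith)
  calc 2 / s * (1 + x / (x + 1)) ≤ 2 / s * 2 := by gcongr; linarith
    _ = 4 / s := by ring

/-- Overlap computation for approximate state reflection: with an orthonormal family
`v` indexed by `[0..n] × [0..n]`, `w := (n+1)^{-1/2} ∑_j v (0,j)` and
`φ̃ := (1 − 2/√(n+1)) w − (2/(n+1)) ∑_{i ≠ j} v (i,j)`, one has
`⟨w, φ̃⟩ = 1 − (2/√(n+1))(1 + n/(n+1)) ≥ 1 − 4/√(n+1)`. -/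
theorem reflection_overlap (n : ℕ) {H : Type*} [NormedAddCommGroup H] [InnerProductSpace ℂ H]
    (v : Fin (n + 1) × Fin (n + 1) → H) (hv : Orthonormal ℂ v)
    (w φt : H)
    (hw : w = ((Real.sqrt (n + 1) : ℂ))⁻¹ • ∑ j : Fin (n + 1), v (0, j))
    (hφt : φt = ((1 - 2 / Real.sqrt (n + 1) : ℝ) : ℂ) • w -
        ((2 / (n + 1) : ℝ) : ℂ) •
          ∑ p ∈ univ.filter (fun p : Fin (n + 1) × Fin (n + 1) => p.1 ≠ p.2), v p) :
    (inner ℂ w φt : ℂ) = ((1 - (2 / Real.sqrt (n + 1)) * (1 + n / (n + 1)) : ℝ) : ℂ) ∧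
    (1 - 4 / Real.sqrt (n + 1) : ℝ) ≤ (inner ℂ w φt : ℂ).re := by
  set row := univ.map (Function.Embedding.sectR (0 : Fin (n + 1)) (Fin (n + 1)))
  set offdiag := univ.filter (fun p : Fin (n + 1) × Fin (n + 1) => p.1 ≠ p.2)
  have hw_row : w = (((√(n + 1))⁻¹ : ℝ) : ℂ) • ∑ p ∈ row, v p := by
    rw [hw, sum_map]; push_cast; rfl
  have hww : inner ℂ w w = (((√(n + 1))⁻¹ * (√(n + 1))⁻¹ * (n + 1) : ℝ) : ℂ) := by
    rw [hw_row, inner_smul_left, inner_smul_right, hv.inner_sum_sum_eq_card, inter_self, card_map]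
    simp [mul_assoc]
  have hw_offdiag : inner ℂ w (∑ p ∈ offdiag, v p) = (((√(n + 1))⁻¹ * n : ℝ) : ℂ) := by
    rw [hw_row, inner_smul_left, hv.inner_sum_sum_eq_card, card_map_sectR_inter_filter_ne]
    simp
  have harith : (1 - 2 / √(n + 1)) * ((√(n + 1))⁻¹ * (√(n + 1))⁻¹ * (n + 1)) -
      2 / (n + 1) * ((√(n + 1))⁻¹ * n) = 1 - 2 / √(n + 1) * (1 + n / (n + 1)) := by
    have hn : (0 : ℝ) < n + 1 := by positivity
    rw [← mul_inv, Real.mul_self_sqrt hn.le, inv_mul_cancel₀ hn.ne']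
    ring
  have hval : inner ℂ w φt = ((1 - (2 / √(n + 1)) * (1 + n / (n + 1)) : ℝ) : ℂ) := by
    rw [hφt, inner_sub_right, inner_smul_right, inner_smul_right, hww, hw_offdiag, ← harith]
    push_cast; rfl
  refine ⟨hval, ?_⟩
  rw [hval, Complex.ofReal_re]
  linarith [two_div_mul_one_add_div_le (Real.sqrt_nonneg (n + 1)) n.cast_nonneg]
end
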